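/- Let n = 3. For every integer k ≥ 2, one has ν_k = ν₂ · h_{k−2}(z₁,z₂,z₃) in R, where h_s denotes the complete homogeneous symmetric polynomial of degree s in z₁, z₂, z₃ (the sum of all monomials of degree s, with h₀ = 1). -/

import Mathlib

open MvPolynomial Finset

noncomputable section

def Zv (n : ℕ) (j : Fin n) : MvPolynomial (Fin n ⊕ Fin n) ℂ := X (Sum.inl j)

def Wv (n : ℕ) (j : Fin n) : MvPolynomial (Fin n ⊕ Fin n) ℂ := X (Sum.inr j)

/-- The `k`-th normalized harmonic moment. -/
def nu (n : ℕ) [NeZero n] (k : ℕ) : MvPolynomial (Fin n ⊕ Fin n) ℂ :=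
  C (Complex.I / 4) *
    ∑ j : Fin n, (Wv n j - Wv n (j + 1)) *
      ∑ m ∈ Finset.range k, Zv n j ^ (k - 1 - m) * Zv n (j + 1) ^ m

lemma hsymm_empty (n : ℕ) : hsymm (Fin 0) ℂ (n+1) = 0 := by
  rw [hsymm, Finset.univ_eq_empty, Finset.sum_empty]

lemma aux_map (α : Type) [DecidableEq α] (n : ℕ) (s : Sym α (n+1)) :
    Multiset.map (X (R := ℂ)) ↑(Sym.map (⇑(Function.Embedding.some (α := α))) s)
      = Multiset.map (⇑(rename (Option.some : α → Option α)) ∘ X) ↑s := by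
  erw [Sym.coe_map, Multiset.map_map]
  congr 1
  funext a
  simp

lemma hsymm_option (α : Type) [DecidableEq α] [Fintype α] (n : ℕ) :
    hsymm (Option α) ℂ (n+1) =
      X none * hsymm (Option α) ℂ n + rename Option.some (hsymm α ℂ (n+1)) := by
  rw [hsymm, hsymm, hsymm]
  rw [← Equiv.sum_comp (symOptionSuccEquiv (α := α) (n := n)).symm]
  rw [Fintype.sum_sum_type]
  congr 1
  · rw [Finset.mul_sum]
    apply Finset.sum_congr rfl
    intro s _
    simp [symOptionSuccEquiv, Sym.coe_cons]
  · rw [map_sum]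
    apply Finset.sum_congr rfl
    intro s _
    simp only [symOptionSuccEquiv, Equiv.coe_fn_symm_mk, SymOptionSuccEquiv.decode_inr]
    rw [map_multiset_prod, Multiset.map_map]
    congr 1
    exact aux_map α n s

lemma hsymm_fin_succ (m n : ℕ) :
    hsymm (Fin (m+1)) ℂ (n+1) =
      X (Fin.last m) * hsymm (Fin (m+1)) ℂ n
        + rename Fin.castSucc (hsymm (Fin m) ℂ (n+1)) := by
  have h1 := hsymm_option (Fin m) n
  have h2 := rename_hsymm _ ℂ (n+1) (finSuccEquivLast (n := m)).symm
  have h3 := rename_hsymm _ ℂ n (finSuccEquivLast (n := m)).symm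
  rw [← h2, h1, map_add, map_mul, rename_X, ← h3, rename_rename]
  have hfun : (⇑(finSuccEquivLast (n := m)).symm ∘ some) = (Fin.castSucc : Fin m → Fin (m+1)) := by
    funext a
    simp [finSuccEquivLast]
  rw [hfun]
  congr 2

lemma hsymm_fin1 (n : ℕ) : hsymm (Fin 1) ℂ n = X 0 ^ n := by
  induction n with
  | zero => simp
  | succ n ih =>
    rw [hsymm_fin_succ 0 n, hsymm_empty, map_zero, add_zero, ih]
    rw [show (Fin.last 0 : Fin 1) = 0 from rfl, pow_succ]
    ring

lemma hsymm_fin2 (n : ℕ) :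
    hsymm (Fin 2) ℂ n = ∑ t ∈ Finset.range (n+1), X 0 ^ (n - t) * X 1 ^ t := by
  induction n with
  | zero => simp
  | succ n ih =>
    rw [hsymm_fin_succ 1 n, ih, hsymm_fin1, map_pow, rename_X]
    rw [Finset.sum_range_succ' _ (n+1)]
    rw [show ((Fin.castSucc : Fin 1 → Fin 2) 0) = 0 from rfl,
        show (Fin.last 1 : Fin 2) = 1 from rfl]
    simp only [Nat.sub_zero, pow_zero, mul_one, Nat.add_sub_add_right, Nat.succ_sub_succ]
    rw [Finset.mul_sum]
    refine congrArg (· + _) ?_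
    apply Finset.sum_congr rfl
    intro t _
    rw [pow_succ]
    ring

lemma hsymm_fin3_rec (n : ℕ) :
    hsymm (Fin 3) ℂ (n+1) =
      X 2 * hsymm (Fin 3) ℂ n + ∑ t ∈ Finset.range (n+2), X 0 ^ (n+1-t) * X 1 ^ t := by
  rw [hsymm_fin_succ 2 n, hsymm_fin2, map_sum]
  rw [show (Fin.last 2 : Fin 3) = 2 from rfl]
  congr 1
  apply Finset.sum_congr rfl
  intro t _
  rw [map_mul, map_pow, map_pow, rename_X, rename_X]
  rfl

lemma key3 (j : Fin 3) (n : ℕ) :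
    hsymm (Fin 3) ℂ (n+1) =
      X (j+2) * hsymm (Fin 3) ℂ n + ∑ t ∈ Finset.range (n+2), X j ^ (n+1-t) * X (j+1) ^ t := by
  have step : ∀ j : Fin 3, (hsymm (Fin 3) ℂ (n+1) =
      X (j+2) * hsymm (Fin 3) ℂ n + ∑ t ∈ Finset.range (n+2), X j ^ (n+1-t) * X (j+1) ^ t) →
      (hsymm (Fin 3) ℂ (n+1) =
      X ((j+1)+2) * hsymm (Fin 3) ℂ n
        + ∑ t ∈ Finset.range (n+2), X (j+1) ^ (n+1-t) * X ((j+1)+1) ^ t) := by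
    intro j hj
    have h := congrArg (rename (⇑(finRotate 3))) hj
    rw [rename_hsymm _ ℂ (n+1) (finRotate 3), map_add, map_mul, rename_X,
        rename_hsymm _ ℂ n (finRotate 3), map_sum] at h
    rw [h]
    congr 1
    · congr 2
      rw [finRotate_succ_apply]
      ac_rfl
    · apply Finset.sum_congr rfl
      intro t _
      rw [map_mul, map_pow, map_pow, rename_X, rename_X, finRotate_succ_apply,
          finRotate_succ_apply]
  have base : hsymm (Fin 3) ℂ (n+1) =
      X ((0 : Fin 3)+2) * hsymm (Fin 3) ℂ n
        + ∑ t ∈ Finset.range (n+2), X (0 : Fin 3) ^ (n+1-t) * X ((0 : Fin 3)+1) ^ t := by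
    rw [hsymm_fin3_rec n]
    norm_num
  fin_cases j
  · exact base
  · exact step 0 base
  · exact step 1 (step 0 base)

def Hb (n : ℕ) : MvPolynomial (Fin 3 ⊕ Fin 3) ℂ :=
  rename Sum.inl (hsymm (Fin 3) ℂ n)

lemma keyb (j : Fin 3) (n : ℕ) :
    ∑ t ∈ Finset.range (n+2), Zv 3 j ^ (n+1-t) * Zv 3 (j+1) ^ t
      = Hb (n+1) - Zv 3 (j+2) * Hb n := by
  have h := congrArg (rename (Sum.inl : Fin 3 → Fin 3 ⊕ Fin 3)) (key3 j n)
  rw [map_add, map_mul, rename_X, map_sum] at h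
  rw [eq_sub_iff_add_eq, Hb, Hb, h, add_comm]
  congr 1
  apply Finset.sum_congr rfl
  intro t _
  rw [map_mul, map_pow, map_pow, rename_X, rename_X]
  rfl

/-- For triangles (`n = 3`): `ν_k = ν₂ · h_{k−2}(z₁,z₂,z₃)`, where `h_s` is the complete
homogeneous symmetric polynomial of degree `s` in the variables `z₁, z₂, z₃`. -/
theorem statement2 (k : ℕ) (hk : 2 ≤ k) :
    nu 3 k = nu 3 2 * MvPolynomial.rename Sum.inl (MvPolynomial.hsymm (Fin 3) ℂ (k - 2)) := by
  obtain ⟨m, rfl⟩ : ∃ m, k = m + 2 := ⟨k - 2, by omega⟩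
  rw [show m + 2 - 2 = m by omega, ← Hb]
  have e : ∀ j : Fin 3, ∑ t ∈ Finset.range (m+2), Zv 3 j ^ (m+2-1-t) * Zv 3 (j+1) ^ t
      = Hb (m+1) - Zv 3 (j+2) * Hb m := by
    intro j
    have h := keyb j m
    rw [show m + 2 - 1 = m + 1 by omega]
    exact h
  rw [nu, nu]
  simp only [e]
  rw [Fin.sum_univ_three, Fin.sum_univ_three]
  norm_num [Finset.sum_range_succ]
  simp only [show ((1+1:Fin 3)) = 2 from by decide, show ((1+2:Fin 3)) = 0 from by decide,
    show ((2+1:Fin 3)) = 0 from by decide, show ((2+2:Fin 3)) = 1 from by decide]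
  ring
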